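/- arXiv:2405.08579 — 2 statements merged into one kernel-verified Lean document; each statement's English description precedes it below -/
import Mathlib

section
/- Let M be an invertible d×d matrix over K whose entries are rational functions of u_0, u_1, u_2, λ only, and suppose that for all i, j ∈ {1,…,N} one has ∂/∂u^i_0 ( ∂M/∂u^j_2 · M^{-1} ) = 0. Let a_0 ∈ ℂ^N be such that M(a_0,u_1,u_2,λ) is well defined and invertible. Then the matrix M̃ := M(a_0,u_1,u_2,λ)^{-1} · M(u_0,u_1,u_2,λ) · M(a_0,u_0,u_1,λ) has entries that are rational functions of u_0, u_1, λ only (in particular independent of u_2). -/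
/-!
Setup: `KK N` is the field of rational functions over `ℂ` in the commuting
variables `λ` (here `lam N`) and `u^γ_ℓ` (here `uu N γ ℓ`, `γ : Fin N`, `ℓ : ℤ`),
realized as the fraction field of the multivariate polynomial ring.
`SS N` is the shift automorphism `S` (fixing `ℂ` and `λ`, sending `u^γ_ℓ` to
`u^γ_{ℓ+1}`), and `Sz N ℓ = S^ℓ`.
-/

set_option maxHeartbeats 1000000

noncomputable section

open MvPolynomial

abbrev RR (N : ℕ) : Type := MvPolynomial (Option (Fin N × ℤ)) ℂ
abbrev KK (N : ℕ) : Type := FractionRing (RR N)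

def lam (N : ℕ) : KK N := algebraMap (RR N) (KK N) (X none)
def uu (N : ℕ) (γ : Fin N) (ℓ : ℤ) : KK N := algebraMap (RR N) (KK N) (X (some (γ, ℓ)))

def shiftIdx (N : ℕ) : Option (Fin N × ℤ) ≃ Option (Fin N × ℤ) :=
  Equiv.optionCongr ((Equiv.refl (Fin N)).prodCongr (Equiv.addRight (1:ℤ)))

/-- The shift on polynomials: `λ ↦ λ`, `u^γ_ℓ ↦ u^γ_{ℓ+1}`. -/
def shiftR (N : ℕ) : RR N ≃+* RR N := (renameEquiv ℂ (shiftIdx N)).toRingEquiv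

/-- The shift automorphism `S` of the field `KK N`. -/
def SS (N : ℕ) : RingAut (KK N) := IsFractionRing.ringEquivOfRingEquiv (shiftR N)

/-- `Sz N ℓ = S^ℓ`. -/
def Sz (N : ℕ) (ℓ : ℤ) : KK N ≃+* KK N := SS N ^ ℓ

/-- The subfield of elements that are rational functions of `λ` and the
variables `u^γ_ℓ` with `ℓ ∈ s` only. -/
def depOn (N : ℕ) (s : Set ℤ) : Subfield (KK N) :=
  Subfield.closure (Set.range (algebraMap ℂ (KK N)) ∪ {lam N} ∪
    {x | ∃ γ : Fin N, ∃ ℓ ∈ s, x = uu N γ ℓ})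

/-- The substitution `u^γ_0 := a0 γ` on polynomials (fixing `λ` and all other
variables). -/
def evalAt (N : ℕ) (a0 : Fin N → ℂ) : RR N →+* RR N :=
  (aeval (fun i : Option (Fin N × ℤ) =>
    match i with
    | none => (X none : RR N)
    | some (γ, ℓ) => if ℓ = 0 then C (a0 γ) else X (some (γ, ℓ)))).toRingHom

/-- `SubstAt N a0 x y` means: the rational function `x` is well defined at
`u_0 = a0` (it has a representation `x = p/q` with `q` not vanishing identically
after the substitution `u_0 := a0`) and its value there is the rational
function `y` of the remaining variables. -/
def SubstAt (N : ℕ) (a0 : Fin N → ℂ) (x y : KK N) : Prop :=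
  ∃ p q : RR N, evalAt N a0 q ≠ 0 ∧
    x * algebraMap (RR N) (KK N) q = algebraMap (RR N) (KK N) p ∧
    y * algebraMap (RR N) (KK N) (evalAt N a0 q) = algebraMap (RR N) (KK N) (evalAt N a0 p)


/-!
Put `L_j := ∂M/∂u^j_2 · M⁻¹`. Condition (i) says that every `∂/∂u^i_0` kills `L_j`, so `L_j`
involves only `u_1, u_2, λ`. Substituting `u_0 = a_0` in `∂M/∂u^j_2 = L_j M` (the substitution
commutes with `∂/∂u^j_2` and fixes `L_j`) gives `∂Ma/∂u^j_2 = L_j Ma`. So `Ma` and `M` solve the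
same linear system in the variables `u_2`, and `Ma⁻¹ M` is killed by every `∂/∂u^j_2`: it
involves only `u_0, u_1, λ`. Finally `Ma` involves only `u_1, u_2, λ`, so its back-shift
involves only `u_0, u_1, λ`.

The algebraic input is that a rational function killed by `∂/∂x` does not involve `x`
(characteristic `0`): for a reduced fraction `p / q`, `q ∂p = p ∂q` forces `q ∣ ∂q`, so `∂q = 0`
by degree, and then `∂p = 0`.
-/

namespace MvPolynomial

section CommRing

variable {σ R : Type*} [CommRing R]

theorem add_single_mem_support_of_mem_support_pderiv {i : σ} {f : MvPolynomial σ R}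
    {m : σ →₀ ℕ} (hm : m ∈ (pderiv i f).support) : m + Finsupp.single i 1 ∈ f.support := by
  rw [mem_support_iff, coeff_pderiv] at hm
  exact mem_support_iff.mpr (left_ne_zero_of_mul hm)

theorem vars_pderiv_subset (i : σ) (f : MvPolynomial σ R) : (pderiv i f).vars ⊆ f.vars := by
  intro j hj
  obtain ⟨m, hm, hjm⟩ := (mem_vars_iff_mem_support j).mp hj
  refine (mem_vars_iff_mem_support j).mpr
    ⟨_, add_single_mem_support_of_mem_support_pderiv hm, ?_⟩
  rw [Finsupp.mem_support_iff] at hjm ⊢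
  simp only [Finsupp.add_apply]
  omega

theorem pderiv_mem_supported {s : Set σ} (i : σ) {f : MvPolynomial σ R}
    (hf : f ∈ supported R s) : pderiv i f ∈ supported R s :=
  mem_supported.mpr ((Finset.coe_subset.mpr (vars_pderiv_subset i f)).trans (mem_supported.mp hf))

theorem degreeOf_pderiv_le (i : σ) (f : MvPolynomial σ R) :
    degreeOf i (pderiv i f) ≤ degreeOf i f - 1 := by
  refine degreeOf_le_iff.mpr fun m hm => ?_
  have := monomial_le_degreeOf i (add_single_mem_support_of_mem_support_pderiv hm)
  simp only [Finsupp.add_apply, Finsupp.single_eq_same] at this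
  omega

theorem degreeOf_le_of_dvd [IsDomain R] (i : σ) {f g : MvPolynomial σ R} (h : f ∣ g)
    (hg : g ≠ 0) : degreeOf i f ≤ degreeOf i g := by
  obtain ⟨c, rfl⟩ := h
  rw [degreeOf_mul_eq (left_ne_zero_of_mul hg) (right_ne_zero_of_mul hg)]
  omega

theorem vars_subset_of_dvd [IsDomain R] {f g : MvPolynomial σ R} (h : f ∣ g) (hg : g ≠ 0) :
    f.vars ⊆ g.vars := by
  intro i hi
  rw [mem_vars_iff_degreeOf_ne_zero] at hi ⊢
  have := degreeOf_le_of_dvd i h hg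
  omega

theorem mem_supported_of_dvd [IsDomain R] {s : Set σ} {f g : MvPolynomial σ R} (h : f ∣ g)
    (hg : g ≠ 0) (hs : g ∈ supported R s) : f ∈ supported R s :=
  mem_supported.mpr ((Finset.coe_subset.mpr (vars_subset_of_dvd h hg)).trans (mem_supported.mp hs))

theorem notMem_vars_of_pderiv_eq_zero [IsDomain R] [CharZero R] {i : σ}
    {f : MvPolynomial σ R} (h : pderiv i f = 0) : i ∉ f.vars := by
  classical
  rw [mem_vars_iff_mem_support]
  rintro ⟨m, hm, hi⟩
  have hm' : m - Finsupp.single i 1 + Finsupp.single i 1 = m := by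
    ext j
    rcases eq_or_ne j i with rfl | hj
    · have := Finsupp.mem_support_iff.mp hi
      simp only [Finsupp.add_apply, Finsupp.tsub_apply, Finsupp.single_eq_same]
      omega
    · simp [Finsupp.single_eq_of_ne hj]
  have := congrArg (coeff (m - Finsupp.single i 1)) h
  rw [coeff_pderiv, hm', coeff_zero] at this
  exact mem_support_iff.mp hm ((mul_eq_zero.mp this).resolve_right (Nat.cast_add_one_ne_zero _))

theorem aeval_mem_supported {τ : Type*} {g : σ → MvPolynomial τ R} {s : Set σ} {t : Set τ}
    (hg : ∀ i ∈ s, g i ∈ supported R t) {f : MvPolynomial σ R} (hf : f ∈ supported R s) :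
    aeval g f ∈ supported R t := by
  have : supported R s ≤ (supported R t).comap (aeval g) := by
    rw [supported_eq_adjoin_X, Algebra.adjoin_le_iff]
    rintro _ ⟨i, hi, rfl⟩
    simpa using hg i hi
  exact this hf

theorem pderiv_aeval_self {i : σ} {g : σ → MvPolynomial σ R}
    (hg : ∀ j, pderiv i (g j) = aeval g (pderiv i (X j : MvPolynomial σ R)))
    (f : MvPolynomial σ R) : pderiv i (aeval g f) = aeval g (pderiv i f) := by
  induction f using MvPolynomial.induction_on with
  | C c => simp
  | add p q hp hq => simp only [map_add, hp, hq]
  | mul_X p j hp =>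
    simp only [map_mul, Derivation.leibniz, smul_eq_mul, aeval_X, hp, hg, map_add]

end CommRing

variable {σ K : Type*} [Field K]

/-- `q ∣ ∂q` is impossible for degree reasons unless `∂q = 0`. -/
theorem pderiv_eq_zero_of_isRelPrime {i : σ} {p q : MvPolynomial σ K} (hpq : IsRelPrime p q)
    (hq : q ≠ 0) (h : q * pderiv i p = p * pderiv i q) : pderiv i p = 0 ∧ pderiv i q = 0 := by
  have hdvd : q ∣ pderiv i q := hpq.symm.dvd_of_dvd_mul_left ⟨pderiv i p, h.symm⟩
  have hq' : pderiv i q = 0 := by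
    by_contra hne
    have h₁ := degreeOf_le_of_dvd i hdvd hne
    have h₂ := degreeOf_pderiv_le i q
    exact hne (pderiv_eq_zero_of_notMem_vars
      (mem_vars_iff_degreeOf_ne_zero.not.mpr (by omega)))
  rw [hq', mul_zero] at h
  exact ⟨(mul_eq_zero.mp h).resolve_left hq, hq'⟩

def ratSupported (K : Type*) [Field K] (s : Set σ) :
    Subfield (FractionRing (MvPolynomial σ K)) :=
  Subfield.closure (algebraMap (MvPolynomial σ K) _ '' supported K s)

variable {s t : Set σ} {x : FractionRing (MvPolynomial σ K)}

theorem algebraMap_ne_zero {p : MvPolynomial σ K} (hp : p ≠ 0) :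
    algebraMap _ (FractionRing (MvPolynomial σ K)) p ≠ 0 :=
  (map_ne_zero_iff _ (IsFractionRing.injective _ _)).mpr hp

theorem algebraMap_mem_ratSupported {p : MvPolynomial σ K} (hp : p ∈ supported K s) :
    algebraMap _ (FractionRing (MvPolynomial σ K)) p ∈ ratSupported K s :=
  Subfield.subset_closure ⟨p, hp, rfl⟩

theorem ratSupported_mono (h : s ⊆ t) : ratSupported K s ≤ ratSupported K t :=
  Subfield.closure_mono (Set.image_mono (supported_mono h))

theorem exists_isRelPrime_of_mem_ratSupported (hx : x ∈ ratSupported K s) :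
    ∃ p q : MvPolynomial σ K, p ∈ supported K s ∧ q ∈ supported K s ∧ q ≠ 0 ∧ IsRelPrime p q ∧
      x * algebraMap _ _ q = algebraMap _ _ p := by
  have hclos : Subring.closure
      (algebraMap (MvPolynomial σ K) (FractionRing (MvPolynomial σ K)) '' supported K s) =
      (supported K s).toSubring.map (algebraMap _ _) :=
    Subring.closure_eq ((supported K s).toSubring.map _)
  obtain ⟨_, ha, _, hb, rfl⟩ := Subfield.mem_closure_iff.mp hx
  rw [hclos] at ha hb
  obtain ⟨a, ha, rfl⟩ := ha
  obtain ⟨b, hb, rfl⟩ := hb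
  rcases eq_or_ne b 0 with rfl | hb0
  · exact ⟨0, 1, zero_mem _, one_mem _, one_ne_zero, isRelPrime_zero_left.mpr isUnit_one,
      by simp⟩
  obtain ⟨a', b', g, hrel, rfl, rfl⟩ := UniqueFactorizationMonoid.exists_reduced_factors' a b hb0
  have hg : g ≠ 0 := left_ne_zero_of_mul hb0
  have hb' : b' ≠ 0 := right_ne_zero_of_mul hb0
  refine ⟨a', b', ?_, mem_supported_of_dvd (dvd_mul_left b' g) hb0 hb, hb', hrel, ?_⟩
  · rcases eq_or_ne a' 0 with rfl | ha0
    · exact zero_mem _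
    · exact mem_supported_of_dvd (dvd_mul_left a' g) (mul_ne_zero hg ha0) ha
  · have := algebraMap_ne_zero (K := K) hg
    have := algebraMap_ne_zero (K := K) hb'
    simp only [map_mul]
    field_simp

theorem map_mem_ratSupported_of_rename
    (φ : FractionRing (MvPolynomial σ K) →+* FractionRing (MvPolynomial σ K)) (e : σ → σ)
    (hφ : ∀ r : MvPolynomial σ K, φ (algebraMap _ _ r) = algebraMap _ _ (rename e r))
    (hx : x ∈ ratSupported K s) : φ x ∈ ratSupported K (e '' s) := by
  have : ratSupported K s ≤ (ratSupported K (e '' s)).comap φ := by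
    refine Subfield.closure_le.mpr ?_
    rintro _ ⟨r, hr, rfl⟩
    rw [SetLike.mem_coe, Subfield.mem_comap, hφ, rename_eq_aeval]
    exact algebraMap_mem_ratSupported
      (aeval_mem_supported (fun i hi => X_mem_supported.mpr (Set.mem_image_of_mem e hi)) hr)
  exact this hx

section Derivation

variable {i : σ}
  {D : Derivation K (FractionRing (MvPolynomial σ K)) (FractionRing (MvPolynomial σ K))}

theorem derivation_algebraMap_eq_pderiv
    (hD : ∀ j, D (algebraMap _ _ (X j : MvPolynomial σ K)) =
      algebraMap _ _ (pderiv i (X j : MvPolynomial σ K)))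
    (r : MvPolynomial σ K) : D (algebraMap _ _ r) = algebraMap _ _ (pderiv i r) :=
  congrArg (· r) (show D.compAlgebraMap (MvPolynomial σ K) =
    (Algebra.linearMap _ (FractionRing (MvPolynomial σ K))).compDer (pderiv i) from
      derivation_ext hD)

theorem derivation_mul_algebraMap_sq
    (hD : ∀ r : MvPolynomial σ K, D (algebraMap _ _ r) = algebraMap _ _ (pderiv i r))
    {p q : MvPolynomial σ K} (h : x * algebraMap _ _ q = algebraMap _ _ p) :
    D x * algebraMap _ _ (q * q) = algebraMap _ _ (pderiv i p * q - p * pderiv i q) := by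
  have hleib := congrArg D h
  rw [Derivation.leibniz, hD, hD, smul_eq_mul, smul_eq_mul] at hleib
  rw [map_mul, map_sub, map_mul, map_mul, ← hleib, ← h]
  ring

theorem derivation_mem_ratSupported
    (hD : ∀ r : MvPolynomial σ K, D (algebraMap _ _ r) = algebraMap _ _ (pderiv i r))
    (hx : x ∈ ratSupported K s) : D x ∈ ratSupported K s := by
  obtain ⟨p, q, hp, hq, hq0, -, hxpq⟩ := exists_isRelPrime_of_mem_ratSupported hx
  rw [eq_div_of_mul_eq (algebraMap_ne_zero (mul_ne_zero hq0 hq0))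
    (derivation_mul_algebraMap_sq hD hxpq)]
  exact div_mem (algebraMap_mem_ratSupported (sub_mem (mul_mem (pderiv_mem_supported i hp) hq)
    (mul_mem hp (pderiv_mem_supported i hq)))) (algebraMap_mem_ratSupported (mul_mem hq hq))

theorem mem_ratSupported_diff_of_derivation_eq_zero [CharZero K]
    (hD : ∀ r : MvPolynomial σ K, D (algebraMap _ _ r) = algebraMap _ _ (pderiv i r))
    (hx : x ∈ ratSupported K s) (hDx : D x = 0) : x ∈ ratSupported K (s \ {i}) := by
  obtain ⟨p, q, hp, hq, hq0, hpq, hxpq⟩ := exists_isRelPrime_of_mem_ratSupported hx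
  have hwronski : q * pderiv i p = p * pderiv i q := by
    have := derivation_mul_algebraMap_sq hD hxpq
    rw [hDx, zero_mul, eq_comm, map_eq_zero_iff _ (IsFractionRing.injective _ _),
      sub_eq_zero] at this
    rw [mul_comm, this]
  obtain ⟨hp', hq'⟩ := pderiv_eq_zero_of_isRelPrime hpq hq0 hwronski
  have hsupp {f : MvPolynomial σ K} (hf : f ∈ supported K s) (hf' : pderiv i f = 0) :
      f ∈ supported K (s \ {i}) := by
    refine mem_supported.mpr fun j hj => ⟨mem_supported.mp hf hj, ?_⟩
    rintro rfl
    exact notMem_vars_of_pderiv_eq_zero hf' hj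
  rw [eq_div_of_mul_eq (algebraMap_ne_zero hq0) hxpq]
  exact div_mem (algebraMap_mem_ratSupported (hsupp hp hp'))
    (algebraMap_mem_ratSupported (hsupp hq hq'))

end Derivation

theorem mem_ratSupported_diff_range_of_derivation_eq_zero [CharZero K] {ι : Type*} [Fintype ι]
    (v : ι → σ)
    (D : ι → Derivation K (FractionRing (MvPolynomial σ K)) (FractionRing (MvPolynomial σ K)))
    (hD : ∀ i, ∀ r : MvPolynomial σ K, D i (algebraMap _ _ r) = algebraMap _ _ (pderiv (v i) r))
    (hx : x ∈ ratSupported K s) (hDx : ∀ i, D i x = 0) :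
    x ∈ ratSupported K (s \ Set.range v) := by
  classical
  suffices ∀ T : Finset ι, x ∈ ratSupported K (s \ v '' T) by
    simpa [Set.image_univ] using this Finset.univ
  intro T
  induction T using Finset.induction_on with
  | empty => simpa using hx
  | insert i T _ ih =>
    rw [Finset.coe_insert, Set.image_insert_eq, Set.insert_eq, Set.union_comm, ← Set.sdiff_sdiff]
    exact mem_ratSupported_diff_of_derivation_eq_zero (hD i) ih (hDx i)

end MvPolynomial

section MatrixDerivation

variable {R A n : Type*} [CommSemiring R] [CommRing A] [Algebra R A] (D : Derivation R A A)

theorem Derivation.map_matrix_mul [Fintype n] (M M' : Matrix n n A) :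
    (M * M').map D = M.map D * M' + M * M'.map D := by
  ext i j
  simp only [Matrix.map_apply, Matrix.add_apply, Matrix.mul_apply, map_sum, Derivation.leibniz,
    smul_eq_mul, ← Finset.sum_add_distrib]
  exact Finset.sum_congr rfl fun k _ => by ring

theorem Derivation.map_matrix_one [DecidableEq n] : (1 : Matrix n n A).map D = 0 := by
  ext i j
  rw [Matrix.map_apply, Matrix.one_apply]
  split_ifs <;> simp

variable [Fintype n] [DecidableEq n]

theorem Derivation.map_matrix_nonsing_inv {M : Matrix n n A} (hM : IsUnit M.det) :
    M⁻¹.map D = -(M⁻¹ * M.map D * M⁻¹) := by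
  have h := D.map_matrix_mul M⁻¹ M
  rw [Matrix.nonsing_inv_mul _ hM, D.map_matrix_one, eq_comm, add_eq_zero_iff_eq_neg] at h
  rw [← Matrix.mul_nonsing_inv_cancel_right M (M⁻¹.map D) hM, h, Matrix.neg_mul, Matrix.mul_assoc]

/-- Two solutions `M`, `M'` of the same linear system `∂X = L X` differ by a constant factor. -/
theorem Derivation.map_nonsing_inv_mul_eq_zero {M M' L : Matrix n n A} (hM : IsUnit M.det)
    (hML : M.map D = L * M) (hM'L : M'.map D = L * M') : (M⁻¹ * M').map D = 0 := by
  rw [D.map_matrix_mul, D.map_matrix_nonsing_inv hM, hML, hM'L, ← Matrix.mul_assoc M⁻¹ L M,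
    Matrix.mul_nonsing_inv_cancel_right M _ hM, Matrix.neg_mul, Matrix.mul_assoc, neg_add_cancel]

end MatrixDerivation

theorem Subfield.nonsing_inv_apply_mem {K n : Type*} [Field K] [Fintype n] [DecidableEq n]
    {S : Subfield K} {M : Matrix n n K} (hM : ∀ i j, M i j ∈ S) (i j : n) : M⁻¹ i j ∈ S := by
  have hM' : M = S.subtype.mapMatrix (Matrix.of fun i j => (⟨M i j, hM i j⟩ : S)) := rfl
  rw [Matrix.inv_def, Matrix.smul_apply, smul_eq_mul, hM', ← RingHom.map_det,
    ← RingHom.map_adjugate, Ring.inverse_eq_inv', ← map_inv₀]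
  exact mul_mem (by simp) (by simp)

open MvPolynomial

section DepOn

variable {N : ℕ}

local notation "ι" => algebraMap (RR N) (KK N)

/-- `none` stands for `λ` and `some (γ, ℓ)` for `u^γ_ℓ`. -/
def levelVars (N : ℕ) (s : Set ℤ) : Set (Option (Fin N × ℤ)) := {v | ∀ a ∈ v, a.2 ∈ s}

@[simp] theorem none_mem_levelVars (s : Set ℤ) : none ∈ levelVars N s := by
  simp [levelVars]

@[simp] theorem some_mem_levelVars {s : Set ℤ} {γ : Fin N} {ℓ : ℤ} :
    some (γ, ℓ) ∈ levelVars N s ↔ ℓ ∈ s := by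
  simp [levelVars]

theorem levelVars_diff (s : Set ℤ) (ℓ : ℤ) :
    levelVars N s \ Set.range (fun γ : Fin N => some (γ, ℓ)) = levelVars N (s \ {ℓ}) := by
  ext (_ | ⟨γ, m⟩) <;> simp [eq_comm]

theorem depOn_mono {s t : Set ℤ} (h : s ⊆ t) : depOn N s ≤ depOn N t :=
  Subfield.closure_mono (Set.union_subset_union_right _ fun _ ⟨γ, ℓ, hℓ, hx⟩ => ⟨γ, ℓ, h hℓ, hx⟩)

theorem depOn_eq_ratSupported (s : Set ℤ) : depOn N s = ratSupported ℂ (levelVars N s) := by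
  apply le_antisymm
  · refine Subfield.closure_le.mpr ?_
    rintro _ ((⟨c, rfl⟩ | rfl) | ⟨γ, ℓ, hℓ, rfl⟩)
    · rw [IsScalarTower.algebraMap_apply ℂ (RR N) (KK N)]
      exact algebraMap_mem_ratSupported (Subalgebra.algebraMap_mem _ c)
    · exact algebraMap_mem_ratSupported (X_mem_supported.mpr (none_mem_levelVars s))
    · exact algebraMap_mem_ratSupported (X_mem_supported.mpr (some_mem_levelVars.mpr hℓ))
  · refine Subfield.closure_le.mpr ?_
    rintro _ ⟨r, hr, rfl⟩
    induction hr using Algebra.adjoin_induction with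
    | mem _ hv =>
      obtain ⟨(_ | ⟨γ, ℓ⟩), hv, rfl⟩ := hv
      · exact Subfield.subset_closure (Or.inl (Or.inr rfl))
      · exact Subfield.subset_closure (Or.inr ⟨γ, ℓ, some_mem_levelVars.mp hv, rfl⟩)
    | algebraMap c =>
      rw [← IsScalarTower.algebraMap_apply ℂ (RR N) (KK N)]
      exact Subfield.subset_closure (Or.inl (Or.inl ⟨c, rfl⟩))
    | add _ _ _ _ hx hy => rw [map_add]; exact add_mem hx hy
    | mul _ _ _ _ hx hy => rw [map_mul]; exact mul_mem hx hy

theorem Pd_algebraMap_eq_pderiv (Pd : Fin N → ℤ → Derivation ℂ (KK N) (KK N))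
    (hPdlam : ∀ i ℓ, Pd i ℓ (lam N) = 0)
    (hPdu : ∀ i ℓ γ m, Pd i ℓ (uu N γ m) = if γ = i ∧ m = ℓ then 1 else 0)
    (i : Fin N) (ℓ : ℤ) (r : RR N) : Pd i ℓ (ι r) = ι (pderiv (some (i, ℓ)) r) := by
  refine derivation_algebraMap_eq_pderiv (fun w => ?_) r
  rcases w with _ | ⟨γ, m⟩
  · exact (hPdlam i ℓ).trans (by simp)
  · refine (hPdu i ℓ γ m).trans ?_
    by_cases h : γ = i ∧ m = ℓ
    · obtain ⟨rfl, rfl⟩ := h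
      simp
    · rw [if_neg h, pderiv_X_of_ne (by simpa using h), map_zero]

section Pd

variable {Pd : Fin N → ℤ → Derivation ℂ (KK N) (KK N)}

theorem Pd_mem_depOn (hPd : ∀ i ℓ (r : RR N), Pd i ℓ (ι r) = ι (pderiv (some (i, ℓ)) r))
    {s : Set ℤ} {x : KK N} (hx : x ∈ depOn N s) (i : Fin N) (ℓ : ℤ) : Pd i ℓ x ∈ depOn N s := by
  rw [depOn_eq_ratSupported] at hx ⊢
  exact derivation_mem_ratSupported (hPd i ℓ) hx

theorem mem_depOn_diff_of_Pd_eq_zero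
    (hPd : ∀ i ℓ (r : RR N), Pd i ℓ (ι r) = ι (pderiv (some (i, ℓ)) r))
    {s : Set ℤ} {ℓ : ℤ} {x : KK N} (hx : x ∈ depOn N s) (hPdx : ∀ i, Pd i ℓ x = 0) :
    x ∈ depOn N (s \ {ℓ}) := by
  rw [depOn_eq_ratSupported] at hx ⊢
  rw [← levelVars_diff]
  exact mem_ratSupported_diff_range_of_derivation_eq_zero _ _ (fun i => hPd i ℓ) hx hPdx

end Pd

theorem Sz_neg_one_algebraMap (r : RR N) : Sz N (-1) (ι r) = ι (rename (shiftIdx N).symm r) := by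
  apply (SS N).injective
  have : SS N (Sz N (-1) (ι r)) = ι r := by
    rw [Sz, zpow_neg_one]
    exact RingEquiv.apply_symm_apply _ _
  rw [this, SS, IsFractionRing.ringEquivOfRingEquiv_algebraMap]
  simp [shiftR, rename_rename]

theorem Sz_neg_one_mem_depOn {s : Set ℤ} {x : KK N} (hx : x ∈ depOn N s) :
    Sz N (-1) x ∈ depOn N ((· + 1) ⁻¹' s) := by
  rw [depOn_eq_ratSupported] at hx ⊢
  refine ratSupported_mono ?_
    (map_mem_ratSupported_of_rename (Sz N (-1)).toRingHom _ Sz_neg_one_algebraMap hx)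
  rintro _ ⟨v, hv, rfl⟩ ⟨γ, ℓ⟩ h
  rw [Option.mem_def, Equiv.symm_apply_eq] at h
  subst h
  simpa [shiftIdx] using hv

section EvalAt

variable (a0 : Fin N → ℂ)

theorem evalAt_mem_supported {s : Set ℤ} {r : RR N} (hr : r ∈ supported ℂ (levelVars N s)) :
    evalAt N a0 r ∈ supported ℂ (levelVars N (s \ {0})) := by
  refine aeval_mem_supported (fun v hv => ?_) hr
  rcases v with _ | ⟨γ, ℓ⟩
  · exact X_mem_supported.mpr (none_mem_levelVars _)
  · dsimp only
    split_ifs with hℓ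
    · exact Subalgebra.algebraMap_mem _ (a0 γ)
    · exact X_mem_supported.mpr (some_mem_levelVars.mpr ⟨some_mem_levelVars.mp hv, hℓ⟩)

theorem evalAt_eq_self {s : Set ℤ} (hs : 0 ∉ s) {r : RR N}
    (hr : r ∈ supported ℂ (levelVars N s)) : evalAt N a0 r = r := by
  refine hom_congr_vars (f₂ := RingHom.id _) ?_ (fun v hv _ => ?_) rfl
  · ext c
    simp [evalAt]
  · rcases v with _ | ⟨γ, ℓ⟩
    · simp [evalAt]
    · have : ℓ ≠ 0 := by
        rintro rfl
        exact hs (some_mem_levelVars.mp (mem_supported.mp hr hv))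
      simp [evalAt, this]

theorem pderiv_evalAt {i : Fin N} {ℓ : ℤ} (hℓ : ℓ ≠ 0) (r : RR N) :
    pderiv (some (i, ℓ)) (evalAt N a0 r) = evalAt N a0 (pderiv (some (i, ℓ)) r) := by
  refine pderiv_aeval_self (fun v => ?_) r
  rcases v with _ | ⟨γ, m⟩
  · simp
  · by_cases hm : m = 0
    · subst hm
      simp [pderiv_X, hℓ]
    · dsimp only
      rw [if_neg hm]
      rcases eq_or_ne (some (γ, m)) (some (i, ℓ)) with h | h
      · rw [h, pderiv_X_self, map_one]
      · rw [pderiv_X_of_ne h, map_zero]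

end EvalAt

section SubstAt

variable {a0 : Fin N → ℂ}

theorem SubstAt.unique {x y y' : KK N} (h : SubstAt N a0 x y) (h' : SubstAt N a0 x y') :
    y = y' := by
  obtain ⟨p, q, hq, hx, hy⟩ := h
  obtain ⟨p', q', hq', hx', hy'⟩ := h'
  have hpq : p * q' = p' * q := by
    apply IsFractionRing.injective (RR N) (KK N)
    rw [map_mul, map_mul, ← hx, ← hx']
    ring
  have hpq' := congrArg (fun r => ι (evalAt N a0 r)) hpq
  simp only [map_mul] at hpq'
  apply mul_right_cancel₀ (algebraMap_ne_zero (mul_ne_zero hq hq'))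
  rw [map_mul]
  linear_combination ι (evalAt N a0 q') * hy - ι (evalAt N a0 q) * hy' + hpq'

theorem SubstAt.add {x y x' y' : KK N} (h : SubstAt N a0 x y) (h' : SubstAt N a0 x' y') :
    SubstAt N a0 (x + x') (y + y') := by
  obtain ⟨p, q, hq, hx, hy⟩ := h
  obtain ⟨p', q', hq', hx', hy'⟩ := h'
  refine ⟨p * q' + p' * q, q * q', by rw [map_mul]; exact mul_ne_zero hq hq', ?_, ?_⟩
  · simp only [map_add, map_mul]
    linear_combination ι q' * hx + ι q * hx'
  · simp only [map_add, map_mul]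
    linear_combination ι (evalAt N a0 q') * hy + ι (evalAt N a0 q) * hy'

theorem SubstAt.mul {x y x' y' : KK N} (h : SubstAt N a0 x y) (h' : SubstAt N a0 x' y') :
    SubstAt N a0 (x * x') (y * y') := by
  obtain ⟨p, q, hq, hx, hy⟩ := h
  obtain ⟨p', q', hq', hx', hy'⟩ := h'
  refine ⟨p * p', q * q', by rw [map_mul]; exact mul_ne_zero hq hq', ?_, ?_⟩
  · simp only [map_mul]
    linear_combination x' * ι q' * hx + ι p * hx'
  · simp only [map_mul]
    linear_combination y' * ι (evalAt N a0 q') * hy + ι (evalAt N a0 p) * hy'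

theorem SubstAt.sum {α : Type*} (s : Finset α) {f g : α → KK N}
    (h : ∀ i ∈ s, SubstAt N a0 (f i) (g i)) : SubstAt N a0 (∑ i ∈ s, f i) (∑ i ∈ s, g i) := by
  classical
  induction s using Finset.induction_on with
  | empty => exact ⟨0, 1, by simp, by simp, by simp⟩
  | insert i s hi ih =>
    rw [Finset.sum_insert hi, Finset.sum_insert hi]
    exact (h i (s.mem_insert_self i)).add (ih fun j hj => h j (Finset.mem_insert_of_mem hj))

theorem SubstAt.matrix_mul {n : Type*} [Fintype n] {A A' B B' : Matrix n n (KK N)}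
    (hA : ∀ i j, SubstAt N a0 (A i j) (A' i j)) (hB : ∀ i j, SubstAt N a0 (B i j) (B' i j))
    (i j : n) : SubstAt N a0 ((A * B) i j) ((A' * B') i j) :=
  SubstAt.sum _ fun k _ => (hA i k).mul (hB k j)

theorem SubstAt.map_Pd {Pd : Fin N → ℤ → Derivation ℂ (KK N) (KK N)}
    (hPd : ∀ i ℓ (r : RR N), Pd i ℓ (ι r) = ι (pderiv (some (i, ℓ)) r)) {i : Fin N} {ℓ : ℤ}
    (hℓ : ℓ ≠ 0) {x y : KK N} (h : SubstAt N a0 x y) : SubstAt N a0 (Pd i ℓ x) (Pd i ℓ y) := by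
  obtain ⟨p, q, hq, hx, hy⟩ := h
  refine ⟨_, q * q, by rw [map_mul]; exact mul_ne_zero hq hq,
    derivation_mul_algebraMap_sq (hPd i ℓ) hx, ?_⟩
  simpa only [map_mul, map_sub, pderiv_evalAt a0 hℓ] using
    derivation_mul_algebraMap_sq (hPd i ℓ) hy

theorem substAt_self_of_mem_depOn {s : Set ℤ} (hs : 0 ∉ s) {x : KK N} (hx : x ∈ depOn N s) :
    SubstAt N a0 x x := by
  rw [depOn_eq_ratSupported] at hx
  obtain ⟨p, q, hp, hq, hq0, -, hxpq⟩ := exists_isRelPrime_of_mem_ratSupported hx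
  refine ⟨p, q, ?_, hxpq, ?_⟩ <;> rw [evalAt_eq_self a0 hs hq]
  · exact hq0
  · rwa [evalAt_eq_self a0 hs hp]

/-- The fraction witnessing `SubstAt` may involve other variables; the reduced fraction `P / Q`
of `x` does not, and `Q` divides every denominator of `x`, so it also witnesses `SubstAt`. -/
theorem mem_depOn_of_substAt {s : Set ℤ} {x y : KK N} (hx : x ∈ depOn N s)
    (h : SubstAt N a0 x y) : y ∈ depOn N (s \ {0}) := by
  rw [depOn_eq_ratSupported] at hx ⊢
  obtain ⟨P, Q, hP, hQ, hQ0, hPQ, hxPQ⟩ := exists_isRelPrime_of_mem_ratSupported hx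
  obtain ⟨p, q, hq, hxpq, hy⟩ := h
  have hcross : P * q = Q * p := by
    apply IsFractionRing.injective (RR N) (KK N)
    rw [map_mul, map_mul, ← hxPQ, ← hxpq]
    ring
  obtain ⟨t, rfl⟩ : Q ∣ q := hPQ.symm.dvd_of_dvd_mul_left ⟨p, hcross⟩
  have heQ : evalAt N a0 Q ≠ 0 := left_ne_zero_of_mul (by rwa [map_mul] at hq)
  have hyPQ : y = ι (evalAt N a0 P) / ι (evalAt N a0 Q) :=
    SubstAt.unique ⟨p, Q * t, hq, hxpq, hy⟩
      ⟨P, Q, heQ, hxPQ, div_mul_cancel₀ _ (algebraMap_ne_zero heQ)⟩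
  rw [hyPQ]
  exact div_mem (algebraMap_mem_ratSupported (evalAt_mem_supported a0 hP))
    (algebraMap_mem_ratSupported (evalAt_mem_supported a0 hQ))

theorem map_Pd_eq_mul_of_substAt {Pd : Fin N → ℤ → Derivation ℂ (KK N) (KK N)}
    (hPd : ∀ i ℓ (r : RR N), Pd i ℓ (ι r) = ι (pderiv (some (i, ℓ)) r))
    {i : Fin N} {ℓ : ℤ} (hℓ : ℓ ≠ 0) {s : Set ℤ} (hs : 0 ∉ s)
    {d : ℕ} {M Ma L : Matrix (Fin d) (Fin d) (KK N)} (hL : ∀ p q, L p q ∈ depOn N s)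
    (hML : M.map (Pd i ℓ) = L * M) (hMa : ∀ p q, SubstAt N a0 (M p q) (Ma p q)) :
    Ma.map (Pd i ℓ) = L * Ma := by
  ext p q
  refine SubstAt.unique ((hMa p q).map_Pd hPd hℓ) ?_
  rw [← Matrix.map_apply (f := Pd i ℓ), hML]
  exact SubstAt.matrix_mul (fun p q => substAt_self_of_mem_depOn hs (hL p q)) hMa p q

end SubstAt

end DepOn

theorem statement2_general (N d : ℕ)
    -- the partial derivatives `∂/∂u^i_ℓ`: the ℂ-derivations sending `u^i_ℓ ↦ 1`,
    -- all other variables and `λ` to `0`: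
    (Pd : Fin N → ℤ → Derivation ℂ (KK N) (KK N))
    (hPdlam : ∀ i ℓ, Pd i ℓ (lam N) = 0)
    (hPdu : ∀ i ℓ γ m, Pd i ℓ (uu N γ m) = if γ = i ∧ m = ℓ then 1 else 0)
    -- `M`, invertible, with entries rational in `u_0, u_1, u_2, λ` only:
    (M : Matrix (Fin d) (Fin d) (KK N))
    (hMdep : ∀ p q, M p q ∈ depOn N {0, 1, 2})
    (hMdet : M.det ≠ 0)
    -- condition (i):
    (hcond : ∀ i j : Fin N, (M.map ⇑(Pd j 2) * M⁻¹).map ⇑(Pd i 0) = 0)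
    -- the substituted matrix `Ma = M(a_0,u_1,u_2,λ)`, well defined and invertible:
    (a0 : Fin N → ℂ) (Ma : Matrix (Fin d) (Fin d) (KK N))
    (hMa : ∀ p q, SubstAt N a0 (M p q) (Ma p q))
    (hMadet : Ma.det ≠ 0) :
    ∀ p q, (Ma⁻¹ * M * Ma.map ⇑(Sz N (-1))) p q ∈ depOn N {0, 1} := by
  have hPd := Pd_algebraMap_eq_pderiv Pd hPdlam hPdu
  set L : Fin N → Matrix (Fin d) (Fin d) (KK N) := fun j => M.map (Pd j 2) * M⁻¹
  have hL j p q : L j p q ∈ depOn N {1, 2} := by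
    have hL012 : L j p q ∈ depOn N {0, 1, 2} :=
      (depOn N _).toSubring.matrix.mul_mem (fun _ _ => Pd_mem_depOn hPd (hMdep _ _) j 2)
        (Subfield.nonsing_inv_apply_mem hMdep) p q
    exact depOn_mono (by intro; simp) (mem_depOn_diff_of_Pd_eq_zero hPd hL012
      fun i => congrFun (congrFun (hcond i j) p) q)
  have hML j : M.map (Pd j 2) = L j * M :=
    (Matrix.nonsing_inv_mul_cancel_right M _ hMdet.isUnit).symm
  have hMaL j : Ma.map (Pd j 2) = L j * Ma :=
    map_Pd_eq_mul_of_substAt hPd two_ne_zero (by simp) (hL j) (hML j) hMa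
  have hMa12 p q : Ma p q ∈ depOn N {1, 2} :=
    depOn_mono (by intro; simp) (mem_depOn_of_substAt (hMdep p q) (hMa p q))
  have hB p q : (Ma⁻¹ * M) p q ∈ depOn N {0, 1} := by
    have hB012 : (Ma⁻¹ * M) p q ∈ depOn N {0, 1, 2} :=
      (depOn N _).toSubring.matrix.mul_mem (fun _ _ => depOn_mono (by intro; simp; omega)
        (Subfield.nonsing_inv_apply_mem hMa12 _ _)) hMdep p q
    exact depOn_mono (by intro; simp; omega) (mem_depOn_diff_of_Pd_eq_zero hPd hB012
      fun j => congrFun (congrFun ((Pd j 2).map_nonsing_inv_mul_eq_zero hMadet.isUnit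
        (hMaL j) (hML j)) p) q)
  have hSMa p q : Ma.map (Sz N (-1)) p q ∈ depOn N {0, 1} :=
    depOn_mono (by intro; simp; omega) (Sz_neg_one_mem_depOn (hMa12 p q))
  exact (depOn N _).toSubring.matrix.mul_mem hB hSMa

/-- first part of Theorem `thmuknew`: if the invertible matrix
`M = M(u_0,u_1,u_2,λ)` satisfies `∂/∂u^i_0(∂M/∂u^j_2 · M⁻¹) = 0` for all `i, j`,
and `Ma = M(a_0,u_1,u_2,λ)` (the substitution `u_0 := a_0`, assumed well defined
and invertible), then `M̃ = M(a_0,u_1,u_2,λ)⁻¹ · M(u_0,u_1,u_2,λ) · M(a_0,u_0,u_1,λ)`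
(where `M(a_0,u_0,u_1,λ) = S⁻¹(Ma)`) has entries that are rational functions of
`u_0, u_1, λ` only. -/
theorem statement2 (N d : ℕ) (hN : 0 < N) (hd : 0 < d)
    -- the partial derivatives `∂/∂u^i_ℓ`: the ℂ-derivations sending `u^i_ℓ ↦ 1`,
    -- all other variables and `λ` to `0`:
    (Pd : Fin N → ℤ → Derivation ℂ (KK N) (KK N))
    (hPdlam : ∀ i ℓ, Pd i ℓ (lam N) = 0)
    (hPdu : ∀ i ℓ γ m, Pd i ℓ (uu N γ m) = if γ = i ∧ m = ℓ then 1 else 0)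
    -- `M`, invertible, with entries rational in `u_0, u_1, u_2, λ` only:
    (M : Matrix (Fin d) (Fin d) (KK N))
    (hMdep : ∀ p q, M p q ∈ depOn N {0, 1, 2})
    (hMdet : M.det ≠ 0)
    -- condition (i):
    (hcond : ∀ i j : Fin N, (M.map ⇑(Pd j 2) * M⁻¹).map ⇑(Pd i 0) = 0)
    -- the substituted matrix `Ma = M(a_0,u_1,u_2,λ)`, well defined and invertible:
    (a0 : Fin N → ℂ) (Ma : Matrix (Fin d) (Fin d) (KK N))
    (hMa : ∀ p q, SubstAt N a0 (M p q) (Ma p q))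
    (hMadet : Ma.det ≠ 0) :
    ∀ p q, (Ma⁻¹ * M * Ma.map ⇑(Sz N (-1))) p q ∈ depOn N {0, 1} :=
  statement2_general N d Pd hPdlam hPdu M hMdep hMdet hcond a0 Ma hMa hMadet
end
end

section
/- Let (M, U) be a matrix Lax representation for the equation ∂_t(u) = F(u_a,…,u_b) whose S-part M has entries that are rational functions of u_0, u_1, u_2, λ only. If (M, U) is gauge equivalent to a trivial matrix Lax representation, then M satisfies, for every j ∈ {1,…,N}, the identity ∂M/∂u^j_2 · M^{-1} = − S( M^{-1} · ( ∂M/∂u^j_1 · M^{-1} + S( M^{-1} · ∂M/∂u^j_0 ) ) · M ). -/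
/-!
Setup: `KK N` is the field of rational functions over `ℂ` in the commuting
variables `λ` (here `lam N`) and `u^γ_ℓ` (here `uu N γ ℓ`, `γ : Fin N`, `ℓ : ℤ`),
realized as the fraction field of the multivariate polynomial ring.
`SS N` is the shift automorphism `S` (fixing `ℂ` and `λ`, sending `u^γ_ℓ` to
`u^γ_{ℓ+1}`), and `Sz N ℓ = S^ℓ`.
-/

set_option maxHeartbeats 1000000
set_option synthInstance.maxHeartbeats 1000000

noncomputable section

open MvPolynomial

namespace Statement5Aux

variable {N : ℕ}

/-- images of the polynomial generators in the fraction field -/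
def aX (N : ℕ) (v : Option (Fin N × ℤ)) : KK N := algebraMap (RR N) (KK N) (X v)

/-- The kernel of a derivation of a field, as a subfield. -/
def derKer (D : Derivation ℂ (KK N) (KK N)) : Subfield (KK N) where
  carrier := {x | D x = 0}
  zero_mem' := by simp
  one_mem' := by simp
  add_mem' := by
    intro a b ha hb
    simp only [Set.mem_setOf_eq] at *
    rw [map_add, ha, hb, add_zero]
  neg_mem' := by
    intro a ha
    simp only [Set.mem_setOf_eq] at *
    rw [map_neg, ha, neg_zero]
  mul_mem' := by
    intro a b ha hb
    simp only [Set.mem_setOf_eq] at *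
    rw [Derivation.leibniz, ha, hb]
    simp
  inv_mem' := by
    intro a ha
    simp only [Set.mem_setOf_eq] at *
    rw [Derivation.leibniz_inv, ha]
    simp

lemma mem_derKer {D : Derivation ℂ (KK N) (KK N)} {x : KK N} : x ∈ derKer D ↔ D x = 0 :=
  Iff.rfl

/-- A polynomial's image lies in any subfield containing the constants and the images of
the variables occurring in it. -/
lemma algebraMap_mem_subfield (F : Subfield (KK N))
    (hC : ∀ c : ℂ, algebraMap ℂ (KK N) c ∈ F) (p : RR N)
    (hX : ∀ v ∈ p.vars, aX N v ∈ F) :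
    algebraMap (RR N) (KK N) p ∈ F := by
  have h1 : p ∈ MvPolynomial.supported ℂ (↑p.vars : Set (Option (Fin N × ℤ))) :=
    MvPolynomial.mem_supported_vars p
  rw [MvPolynomial.supported_eq_adjoin_X] at h1
  have h2 : p ∈ (Algebra.adjoin ℂ (MvPolynomial.X '' (↑p.vars : Set (Option (Fin N × ℤ)))) :
      Subalgebra ℂ (RR N)).toSubring := h1
  rw [Algebra.adjoin_eq_ring_closure] at h2
  have h3 : Subring.closure (Set.range (algebraMap ℂ (RR N)) ∪
      MvPolynomial.X '' (↑p.vars : Set (Option (Fin N × ℤ)))) ≤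
      F.toSubring.comap (algebraMap (RR N) (KK N)) := by
    apply Subring.closure_le.2
    rintro x (⟨c, rfl⟩ | ⟨v, hv, rfl⟩)
    · show algebraMap (RR N) (KK N) (algebraMap ℂ (RR N) c) ∈ F
      rw [← IsScalarTower.algebraMap_apply]
      exact hC c
    · exact hX v hv
  exact h3 h2

/-- Every element of the fraction field is killed by any derivation killing the finitely
many relevant variables. -/
lemma exists_vars (x : KK N) :
    ∃ t : Finset (Option (Fin N × ℤ)), ∀ D : Derivation ℂ (KK N) (KK N),
      (∀ v ∈ t, D (aX N v) = 0) → D x = 0 := by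
  obtain ⟨p, q, hq, rfl⟩ := IsFractionRing.div_surjective (A := RR N) x
  refine ⟨p.vars ∪ q.vars, fun D hD => ?_⟩
  have hp' : algebraMap (RR N) (KK N) p ∈ derKer D :=
    algebraMap_mem_subfield _ (fun c => Derivation.map_algebraMap D c) p
      (fun v hv => hD v (Finset.mem_union_left _ hv))
  have hq' : algebraMap (RR N) (KK N) q ∈ derKer D :=
    algebraMap_mem_subfield _ (fun c => Derivation.map_algebraMap D c) q
      (fun v hv => hD v (Finset.mem_union_right _ hv))
  exact mem_derKer.1 (Subfield.div_mem _ hp' hq')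

/-- Two derivations agreeing on the variables agree everywhere. -/
lemma derivation_ext {D D' : Derivation ℂ (KK N) (KK N)}
    (h : ∀ v, D (aX N v) = D' (aX N v)) (x : KK N) : D x = D' x := by
  have h0 : ∀ v, (D - D') (aX N v) = 0 := by
    intro v
    simp [Derivation.sub_apply, h v]
  obtain ⟨t, ht⟩ := exists_vars x
  have := ht (D - D') (fun v _ => h0 v)
  simpa [Derivation.sub_apply, sub_eq_zero] using this


lemma SS_algebraMap (r : RR N) :
    SS N (algebraMap (RR N) (KK N) r) = algebraMap (RR N) (KK N) (shiftR N r) :=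
  IsFractionRing.ringEquivOfRingEquiv_algebraMap (shiftR N) r

lemma SS_C (c : ℂ) : SS N (algebraMap ℂ (KK N) c) = algebraMap ℂ (KK N) c := by
  rw [IsScalarTower.algebraMap_apply ℂ (RR N) (KK N), SS_algebraMap]
  congr 1
  simp [shiftR, MvPolynomial.algebraMap_eq]

lemma SS_lam : SS N (lam N) = lam N := by
  rw [lam, SS_algebraMap]
  congr 1
  simp [shiftR, shiftIdx]

lemma SS_uu (γ : Fin N) (ℓ : ℤ) : SS N (uu N γ ℓ) = uu N γ (ℓ + 1) := by
  rw [uu, SS_algebraMap]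
  congr 1
  simp [shiftR, shiftIdx, uu]

lemma Sz_one : Sz N 1 = SS N := by
  rw [Sz, zpow_one]

/-- Elements of `depOn N s` are killed by any derivation killing `lam` and the relevant `uu`. -/
lemma depOn_killed (D : Derivation ℂ (KK N) (KK N)) (s : Set ℤ)
    (hlam : D (lam N) = 0) (hu : ∀ γ ℓ, ℓ ∈ s → D (uu N γ ℓ) = 0)
    {x : KK N} (hx : x ∈ depOn N s) : D x = 0 := by
  have : depOn N s ≤ derKer D := by
    apply Subfield.closure_le.2
    rintro y ((⟨c, rfl⟩ | rfl) | ⟨γ, ℓ, hℓ, rfl⟩)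
    · exact Derivation.map_algebraMap D c
    · exact hlam
    · exact hu γ ℓ hℓ
  exact this hx

lemma depOn_empty_fixed {x : KK N} (hx : x ∈ depOn N ∅) : SS N x = x := by
  have : depOn N (∅ : Set ℤ) ≤ RingHom.eqLocusField (SS N : KK N →+* KK N)
      (RingHom.id (KK N)) := by
    apply Subfield.closure_le.2
    rintro y ((⟨c, rfl⟩ | rfl) | ⟨γ, ℓ, hℓ, rfl⟩)
    · exact SS_C c
    · exact SS_lam
    · exact absurd hℓ (Set.notMem_empty ℓ)
  exact this hx

/-- Conjugation of a derivation by a ring automorphism fixing the constants. -/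
def conjDer (e : KK N ≃+* KK N)
    (he : ∀ c : ℂ, e (algebraMap ℂ (KK N) c) = algebraMap ℂ (KK N) c)
    (D : Derivation ℂ (KK N) (KK N)) : Derivation ℂ (KK N) (KK N) where
  toFun x := e.symm (D (e x))
  map_add' x y := by simp
  map_smul' c x := by
    have hes : ∀ y : KK N, e.symm (algebraMap ℂ (KK N) c * y)
        = algebraMap ℂ (KK N) c * e.symm y := by
      intro y
      rw [map_mul]
      congr 1
      conv_lhs => rw [← he c, RingEquiv.symm_apply_apply]
    simp only [Algebra.smul_def, RingHom.id_apply]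
    rw [map_mul, he c, Derivation.leibniz, Derivation.map_algebraMap]
    rw [smul_zero, add_zero, smul_eq_mul, hes, ← Algebra.smul_def]
  map_one_eq_zero' := by
    simp only [LinearMap.coe_mk, AddHom.coe_mk, map_one, Derivation.map_one_eq_zero, map_zero]
  leibniz' x y := by
    simp only [LinearMap.coe_mk, AddHom.coe_mk, smul_eq_mul]
    rw [map_mul, Derivation.leibniz]
    simp only [smul_eq_mul, map_add, map_mul]
    rw [RingEquiv.symm_apply_apply, RingEquiv.symm_apply_apply]

lemma conjDer_apply (e : KK N ≃+* KK N) (he) (D : Derivation ℂ (KK N) (KK N)) (x : KK N) :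
    conjDer e he D x = e.symm (D (e x)) := rfl


/-- `∂/∂u^j_ℓ ∘ S = S ∘ ∂/∂u^j_{ℓ-1}`. -/
lemma pd_shift (D D' : Derivation ℂ (KK N) (KK N)) (j : Fin N) (ℓ : ℤ)
    (hDlam : D (lam N) = 0) (hD'lam : D' (lam N) = 0)
    (hDu : ∀ γ m, D (uu N γ m) = if γ = j ∧ m = ℓ then 1 else 0)
    (hD'u : ∀ γ m, D' (uu N γ m) = if γ = j ∧ m = ℓ - 1 then 1 else 0)
    (x : KK N) : D (SS N x) = SS N (D' x) := by
  have h := derivation_ext (D := conjDer (SS N) SS_C D) (D' := D') ?_ x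
  · rw [conjDer_apply] at h
    rw [← h, RingEquiv.apply_symm_apply]
  · intro v
    rw [conjDer_apply]
    match v with
    | none =>
      show (SS N).symm (D (SS N (lam N))) = D' (lam N)
      rw [SS_lam, hDlam, map_zero, hD'lam]
    | some (γ, m) =>
      show (SS N).symm (D (SS N (uu N γ m))) = D' (uu N γ m)
      rw [SS_uu, hDu, hD'u]
      by_cases hc : γ = j ∧ m = ℓ - 1
      · rw [if_pos ⟨hc.1, by omega⟩, if_pos hc, map_one]
      · rw [if_neg (by rintro ⟨h1, h2⟩; exact hc ⟨h1, by omega⟩), if_neg hc, map_zero]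

section Matrices

variable {d : ℕ}

lemma mat_der_mul (D : Derivation ℂ (KK N) (KK N)) (A B : Matrix (Fin d) (Fin d) (KK N)) :
    (A * B).map ⇑D = A.map ⇑D * B + A * B.map ⇑D := by
  ext p q
  simp only [Matrix.map_apply, Matrix.mul_apply, Matrix.add_apply]
  rw [map_sum, ← Finset.sum_add_distrib]
  refine Finset.sum_congr rfl fun k _ => ?_
  rw [Derivation.leibniz, smul_eq_mul, smul_eq_mul]
  ring

lemma mat_der_one (D : Derivation ℂ (KK N) (KK N)) :
    (1 : Matrix (Fin d) (Fin d) (KK N)).map ⇑D = 0 := by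
  ext p q
  by_cases h : p = q <;>
    simp [Matrix.map_apply, Matrix.one_apply, h]

lemma matS_mul (A B : Matrix (Fin d) (Fin d) (KK N)) :
    (A * B).map ⇑(SS N) = A.map ⇑(SS N) * B.map ⇑(SS N) := by
  ext p q
  simp [Matrix.map_apply, Matrix.mul_apply, map_sum]

lemma matS_zero : (0 : Matrix (Fin d) (Fin d) (KK N)).map ⇑(SS N) = 0 := by
  ext p q
  simp [Matrix.map_apply]

lemma matS_eq_zero {A : Matrix (Fin d) (Fin d) (KK N)} (h : A.map ⇑(SS N) = 0) : A = 0 := by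
  ext p q
  have := congrFun (congrFun h p) q
  simp only [Matrix.map_apply, Matrix.zero_apply] at this ⊢
  exact (SS N).injective (by rw [this, map_zero])

lemma matS_det (A : Matrix (Fin d) (Fin d) (KK N)) :
    (A.map ⇑(SS N)).det = SS N A.det := by
  exact ((SS N : KK N →+* KK N).map_det A).symm

end Matrices

end Statement5Aux

open Statement5Aux

set_option maxHeartbeats 4000000 in
/-- Theorem `thtrmlp`, "only if" part: if a matrix Lax
representation `(M, U)` of `∂ₜ(u) = F(u_a,…,u_b)`, whose S-part `M` depends
only on `u_0, u_1, u_2, λ`, is gauge equivalent to a trivial MLR (one whose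
S-part involves none of the variables `u^γ_ℓ`), then for every `j`
`∂M/∂u^j_2 · M⁻¹ = − S( M⁻¹ · ( ∂M/∂u^j_1 · M⁻¹ + S( M⁻¹ · ∂M/∂u^j_0 ) ) · M )`. -/
theorem statement5 (N d : ℕ) (hN : 0 < N) (hd : 0 < d) (a b : ℤ) (hab : a ≤ b)
    (F : Fin N → KK N) (hF : ∀ γ, F γ ∈ depOn N (Set.Icc a b))
    (Dt : Derivation ℂ (KK N) (KK N)) (hDtlam : Dt (lam N) = 0)
    (hDtu : ∀ γ ℓ, Dt (uu N γ ℓ) = Sz N ℓ (F γ))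
    -- the partial derivatives `∂/∂u^i_ℓ`:
    (Pd : Fin N → ℤ → Derivation ℂ (KK N) (KK N))
    (hPdlam : ∀ i ℓ, Pd i ℓ (lam N) = 0)
    (hPdu : ∀ i ℓ γ m, Pd i ℓ (uu N γ m) = if γ = i ∧ m = ℓ then 1 else 0)
    -- the MLR `(M, U)`, with `M` depending only on `u_0, u_1, u_2, λ`:
    (M U : Matrix (Fin d) (Fin d) (KK N))
    (hMdep : ∀ p q, M p q ∈ depOn N {0, 1, 2})
    (hMdet : M.det ≠ 0)
    (hLax : M.map ⇑Dt = U.map ⇑(Sz N 1) * M - M * U)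
    -- `(M, U)` is gauge equivalent to a trivial MLR:
    (htriv : ∃ g : Matrix (Fin d) (Fin d) (KK N), g.det ≠ 0 ∧
      ∀ p q, (g.map ⇑(Sz N 1) * M * g⁻¹) p q ∈ depOn N ∅) :
    ∀ j : Fin N,
      M.map ⇑(Pd j 2) * M⁻¹ =
        -((M⁻¹ * (M.map ⇑(Pd j 1) * M⁻¹ + (M⁻¹ * M.map ⇑(Pd j 0)).map ⇑(Sz N 1)) * M).map
            ⇑(Sz N 1)) := by
  intro j
  classical
  obtain ⟨g, hgdet, hgtriv⟩ := htriv
  rw [Sz_one] at hgtriv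
  rw [Sz_one]
  -- invertibility facts
  have hMu : IsUnit M.det := isUnit_iff_ne_zero.2 hMdet
  have hgu : IsUnit g.det := isUnit_iff_ne_zero.2 hgdet
  have hgSdet : (g.map ⇑(SS N)).det ≠ 0 := by
    rw [matS_det]
    exact fun h => hgdet ((SS N).injective (by rw [h, map_zero]))
  have hgSu : IsUnit (g.map ⇑(SS N)).det := isUnit_iff_ne_zero.2 hgSdet
  have hMM : M * M⁻¹ = 1 := Matrix.mul_nonsing_inv M hMu
  have hM'M : M⁻¹ * M = 1 := Matrix.nonsing_inv_mul M hMu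
  have hgg : g * g⁻¹ = 1 := Matrix.mul_nonsing_inv g hgu
  have hg'g : g⁻¹ * g = 1 := Matrix.nonsing_inv_mul g hgu
  have hSS' : g.map ⇑(SS N) * (g.map ⇑(SS N))⁻¹ = 1 := Matrix.mul_nonsing_inv _ hgSu
  have hS'S : (g.map ⇑(SS N))⁻¹ * g.map ⇑(SS N) = 1 := Matrix.nonsing_inv_mul _ hgSu
  -- cancellation helpers
  have cS : ∀ X : Matrix (Fin d) (Fin d) (KK N),
      (g.map ⇑(SS N))⁻¹ * (g.map ⇑(SS N) * X) = X := fun X => by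
    rw [← Matrix.mul_assoc, hS'S, Matrix.one_mul]
  have cM : ∀ X : Matrix (Fin d) (Fin d) (KK N), M⁻¹ * (M * X) = X := fun X => by
    rw [← Matrix.mul_assoc, hM'M, Matrix.one_mul]
  have cg' : ∀ X : Matrix (Fin d) (Fin d) (KK N), g * (g⁻¹ * X) = X := fun X => by
    rw [← Matrix.mul_assoc, hgg, Matrix.one_mul]
  -- commutation of partial derivatives with the shift
  have hPS : ∀ (ℓ : ℤ) (A : Matrix (Fin d) (Fin d) (KK N)),
      (A.map ⇑(SS N)).map ⇑(Pd j ℓ) = (A.map ⇑(Pd j (ℓ - 1))).map ⇑(SS N) := by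
    intro ℓ A
    ext p q
    simp only [Matrix.map_apply]
    exact pd_shift (Pd j ℓ) (Pd j (ℓ - 1)) j ℓ (hPdlam j ℓ) (hPdlam j (ℓ - 1))
      (hPdu j ℓ) (hPdu j (ℓ - 1)) (A p q)
  -- M depends only on u_0, u_1, u_2
  have hMP0 : ∀ ℓ : ℤ, ℓ ≠ 0 → ℓ ≠ 1 → ℓ ≠ 2 → M.map ⇑(Pd j ℓ) = 0 := by
    intro ℓ h0 h1 h2
    ext p q
    simp only [Matrix.map_apply, Matrix.zero_apply]
    refine depOn_killed _ _ (hPdlam j ℓ) ?_ (hMdep p q)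
    intro γ m hm
    rw [hPdu, if_neg]
    rintro ⟨-, rfl⟩
    simp only [Set.mem_insert_iff, Set.mem_singleton_iff] at hm
    tauto
  -- the gauge-transformed S-part is constant
  have hHP : ∀ ℓ : ℤ, (g.map ⇑(SS N) * M * g⁻¹).map ⇑(Pd j ℓ) = 0 := by
    intro ℓ
    ext p q
    simp only [Matrix.map_apply, Matrix.zero_apply]
    exact depOn_killed _ ∅ (hPdlam j ℓ)
      (fun γ m hm => absurd hm (Set.notMem_empty m)) (hgtriv p q)
  -- derivative of g⁻¹
  have hginv : ∀ ℓ : ℤ, (g⁻¹).map ⇑(Pd j ℓ) = -(g⁻¹ * (g.map ⇑(Pd j ℓ) * g⁻¹)) := by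
    intro ℓ
    have h1 := mat_der_mul (Pd j ℓ) g g⁻¹
    rw [hgg, mat_der_one] at h1
    have h2 := congrArg (fun X => g⁻¹ * X) h1.symm
    simp only [Matrix.mul_add, Matrix.mul_zero] at h2
    rw [← Matrix.mul_assoc g⁻¹ g ((g⁻¹).map ⇑(Pd j ℓ)), hg'g, Matrix.one_mul] at h2
    exact eq_neg_of_add_eq_zero_right h2
  -- the master identity
  have master : ∀ ℓ : ℤ,
      g.map ⇑(SS N) * M * g⁻¹ * g.map ⇑(Pd j ℓ) =
        (g.map ⇑(Pd j (ℓ - 1))).map ⇑(SS N) * M + g.map ⇑(SS N) * M.map ⇑(Pd j ℓ) := by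
    intro ℓ
    have h1 := hHP ℓ
    rw [mat_der_mul, mat_der_mul, hPS, hginv] at h1
    have h2 := congrArg (fun X => X * g) h1
    simp only [Matrix.add_mul, Matrix.mul_assoc, Matrix.neg_mul, Matrix.mul_neg, hg'g,
      Matrix.mul_one, Matrix.zero_mul] at h2
    rw [add_neg_eq_zero] at h2
    simp only [Matrix.mul_assoc]
    exact h2.symm
  -- vanishing of ∂g/∂u^j_ℓ for large |ℓ|
  have hbig : ∃ L : ℤ, 3 ≤ L ∧ (∀ ℓ : ℤ, L ≤ ℓ → g.map ⇑(Pd j ℓ) = 0) ∧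
      (∀ ℓ : ℤ, ℓ ≤ -L → g.map ⇑(Pd j ℓ) = 0) := by
    choose t ht using fun p q : Fin d => exists_vars (N := N) (g p q)
    set T : Finset (Option (Fin N × ℤ)) :=
      Finset.univ.biUnion fun p : Fin d => Finset.univ.biUnion fun q : Fin d => t p q with hT
    set n : ℕ := T.sup fun v => Option.elim v 0 fun w => w.2.natAbs with hn
    have key : ∀ ℓ : ℤ, (∀ γ : Fin N, (some (γ, ℓ) : Option (Fin N × ℤ)) ∉ T) →
        g.map ⇑(Pd j ℓ) = 0 := by
      intro ℓ hnot
      ext p q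
      simp only [Matrix.map_apply, Matrix.zero_apply]
      refine ht p q (Pd j ℓ) ?_
      rintro (_ | ⟨γ, m⟩) hv
      · exact hPdlam j ℓ
      · have hvT : (some (γ, m) : Option (Fin N × ℤ)) ∈ T := by
          rw [hT]
          exact Finset.mem_biUnion.2 ⟨p, Finset.mem_univ _,
            Finset.mem_biUnion.2 ⟨q, Finset.mem_univ _, hv⟩⟩
        show Pd j ℓ (uu N γ m) = 0
        rw [hPdu, if_neg]
        rintro ⟨-, rfl⟩
        exact hnot γ hvT
    have hsup : ∀ (γ : Fin N) (m : ℤ), (some (γ, m) : Option (Fin N × ℤ)) ∈ T → m.natAbs ≤ n := by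
      intro γ m hm
      exact Finset.le_sup (f := fun v : Option (Fin N × ℤ) =>
        Option.elim v 0 fun w => w.2.natAbs) hm
    refine ⟨3 + (n : ℤ), by omega, ?_, ?_⟩
    · intro ℓ hℓ
      refine key ℓ fun γ hmem => ?_
      have := hsup γ ℓ hmem
      omega
    · intro ℓ hℓ
      refine key ℓ fun γ hmem => ?_
      have := hsup γ ℓ hmem
      omega
  obtain ⟨L, hL3, hLup, hLdn⟩ := hbig
  -- ∂g/∂u^j_ℓ = 0 for ℓ ≥ 2
  have hzup : ∀ ℓ : ℤ, 2 ≤ ℓ → g.map ⇑(Pd j ℓ) = 0 := by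
    have key : ∀ k : ℕ, ∀ ℓ : ℤ, 2 ≤ ℓ → L ≤ ℓ + k → g.map ⇑(Pd j ℓ) = 0 := by
      intro k
      induction k with
      | zero => intro ℓ h2 hLl; exact hLup ℓ (by omega)
      | succ k ih =>
        intro ℓ h2 hLl
        by_cases hc : L ≤ ℓ
        · exact hLup ℓ hc
        · have hnext : g.map ⇑(Pd j (ℓ + 1)) = 0 := ih (ℓ + 1) (by omega) (by omega)
          have hm := master (ℓ + 1)
          rw [hnext, hMP0 (ℓ + 1) (by omega) (by omega) (by omega), Matrix.mul_zero,
            Matrix.mul_zero, add_zero, show ℓ + 1 - 1 = ℓ from by ring] at hm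
          have h3 := congrArg (fun X => X * M⁻¹) hm.symm
          simp only [Matrix.mul_assoc, hMM, Matrix.mul_one, Matrix.zero_mul] at h3
          exact matS_eq_zero h3
    intro ℓ h2
    exact key (L - ℓ).toNat ℓ h2 (by omega)
  -- ∂g/∂u^j_ℓ = 0 for ℓ ≤ -1
  have hzdn : ∀ ℓ : ℤ, ℓ ≤ -1 → g.map ⇑(Pd j ℓ) = 0 := by
    have key : ∀ k : ℕ, ∀ ℓ : ℤ, ℓ ≤ -1 → ℓ + L ≤ k → g.map ⇑(Pd j ℓ) = 0 := by
      intro k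
      induction k with
      | zero => intro ℓ h1 hk; exact hLdn ℓ (by omega)
      | succ k ih =>
        intro ℓ h1 hk
        by_cases hc : ℓ ≤ -L
        · exact hLdn ℓ hc
        · have hprev : g.map ⇑(Pd j (ℓ - 1)) = 0 := ih (ℓ - 1) (by omega) (by omega)
          have hm := master ℓ
          rw [hprev, matS_zero, Matrix.zero_mul, hMP0 ℓ (by omega) (by omega) (by omega),
            Matrix.mul_zero, add_zero] at hm
          have h3 := congrArg (fun X => g * (M⁻¹ * ((g.map ⇑(SS N))⁻¹ * X))) hm
          simp only [Matrix.mul_assoc, Matrix.mul_zero] at h3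
          rw [cS, cM, cg'] at h3
          exact h3
    intro ℓ h1
    exact key (ℓ + L).toNat ℓ h1 (by omega)
  -- the three remaining equations
  have hm0 := master 0
  rw [show (0 : ℤ) - 1 = -1 from by ring, hzdn (-1) (by omega), matS_zero, Matrix.zero_mul,
    zero_add] at hm0
  have hα0 : g.map ⇑(Pd j 0) = g * (M⁻¹ * M.map ⇑(Pd j 0)) := by
    have h3 := congrArg (fun X => g * (M⁻¹ * ((g.map ⇑(SS N))⁻¹ * X))) hm0
    simp only [Matrix.mul_assoc] at h3
    rw [cS, cM, cg', cS] at h3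
    exact h3
  have hm1 := master 1
  rw [show (1 : ℤ) - 1 = 0 from by ring, hα0, matS_mul] at hm1
  have hα1 : g.map ⇑(Pd j 1) =
      g * (M⁻¹ * ((M⁻¹ * M.map ⇑(Pd j 0)).map ⇑(SS N) * M + M.map ⇑(Pd j 1))) := by
    have h3 := congrArg (fun X => g * (M⁻¹ * ((g.map ⇑(SS N))⁻¹ * X))) hm1
    simp only [Matrix.mul_assoc] at h3
    rw [cS, cM, cg', ← Matrix.mul_add (g.map ⇑(SS N)), cS] at h3
    exact h3
  have hm2 := master 2
  rw [show (2 : ℤ) - 1 = 1 from by ring, hzup 2 (by omega), Matrix.mul_zero, hα1,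
    matS_mul] at hm2
  have h4 := congrArg (fun X => (g.map ⇑(SS N))⁻¹ * X) hm2.symm
  simp only [Matrix.mul_assoc, Matrix.mul_add, Matrix.mul_zero] at h4
  rw [cS, cS] at h4
  have hB2 : M.map ⇑(Pd j 2) =
      -((M⁻¹ * ((M⁻¹ * M.map ⇑(Pd j 0)).map ⇑(SS N) * M) + M⁻¹ * M.map ⇑(Pd j 1)).map ⇑(SS N)
        * M) := eq_neg_of_add_eq_zero_right h4
  have hZY : M⁻¹ * (M.map ⇑(Pd j 1) * M⁻¹ + (M⁻¹ * M.map ⇑(Pd j 0)).map ⇑(SS N)) * M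
      = M⁻¹ * ((M⁻¹ * M.map ⇑(Pd j 0)).map ⇑(SS N) * M) + M⁻¹ * M.map ⇑(Pd j 1) := by
    simp only [Matrix.mul_add, Matrix.add_mul, Matrix.mul_assoc, hM'M, Matrix.mul_one]
    abel
  rw [hZY, hB2, Matrix.neg_mul, Matrix.mul_assoc, hMM, Matrix.mul_one]
end
end
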